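/- For α ≥ 0 and k in the upper half-plane (Im k > 0, k² in the resolvent set), the function x ↦ -e^{2ik|x|}/(4π|x|²(4πα - ik)) is integrable over ℝ³ and its integral equals 1/(2ik(4πα - ik)). -/

import Mathlib

open MeasureTheory Real Set

/-!
In polar coordinates on ℝ³ the factor `|x|⁻²` cancels the Jacobian `4π r²`, so the integral
reduces to `-(4π)⁻¹ (4πα - ik)⁻¹ · 4π ∫₀^∞ e^{2ikr} dr`, and `∫₀^∞ e^{2ikr} dr = -1/(2ik)`
converges because `Im k > 0`.
-/

namespace EuclideanSpace

theorem integral_fun_norm_fin_three {F : Type*} [NormedAddCommGroup F] [NormedSpace ℝ F]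
    (f : ℝ → F) :
    ∫ x : EuclideanSpace ℝ (Fin 3), f ‖x‖ = (4 * π) • ∫ r in Ioi (0 : ℝ), r ^ 2 • f r := by
  rw [integral_fun_norm_addHaar, finrank_euclideanSpace_fin, measureReal_def,
    volume_ball_fin_three, ENNReal.ofReal_one, one_pow, one_mul,
    ENNReal.toReal_ofReal (by positivity), ← Nat.cast_smul_eq_nsmul ℝ, smul_smul]
  congr 1
  ring

theorem sq_smul_cexp_mul_div_sq {b : ℂ} {r : ℝ} (hr : r ≠ 0) :
    r ^ 2 • (Complex.exp (b * r) / (r : ℂ) ^ 2) = Complex.exp (b * r) := by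
  have : (r : ℂ) ≠ 0 := Complex.ofReal_ne_zero.mpr hr
  rw [Complex.real_smul, Complex.ofReal_pow]
  field_simp

theorem integrable_cexp_mul_norm_div_norm_sq {b : ℂ} (hb : b.re < 0) :
    Integrable fun x : EuclideanSpace ℝ (Fin 3) => Complex.exp (b * ‖x‖) / (‖x‖ : ℂ) ^ 2 := by
  refine (integrable_fun_norm_addHaar volume
    (f := fun r : ℝ => Complex.exp (b * r) / (r : ℂ) ^ 2)).mpr ?_
  rw [finrank_euclideanSpace_fin]
  refine (integrableOn_exp_mul_complex_Ioi hb 0).congr_fun (fun r hr => ?_) measurableSet_Ioi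
  exact (sq_smul_cexp_mul_div_sq (ne_of_gt hr)).symm

theorem integral_cexp_mul_norm_div_norm_sq {b : ℂ} (hb : b.re < 0) :
    ∫ x : EuclideanSpace ℝ (Fin 3), Complex.exp (b * ‖x‖) / (‖x‖ : ℂ) ^ 2 = -(4 * π) / b := by
  rw [integral_fun_norm_fin_three (fun r : ℝ => Complex.exp (b * r) / (r : ℂ) ^ 2),
    setIntegral_congr_fun measurableSet_Ioi fun r hr => sq_smul_cexp_mul_div_sq (ne_of_gt hr),
    integral_exp_mul_complex_Ioi hb 0, Complex.real_smul]
  simp only [Complex.ofReal_zero, mul_zero, Complex.exp_zero]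
  push_cast
  ring

end EuclideanSpace

open EuclideanSpace in
theorem relative_resolvent_trace_one_delta (α : ℝ) (k : ℂ) (hk : 0 < k.im) :
    Integrable (fun x : EuclideanSpace ℝ (Fin 3) =>
        -Complex.exp (2 * Complex.I * k * ‖x‖) /
          (4 * π * ‖x‖ ^ 2 * (4 * π * α - Complex.I * k))) ∧
    ∫ x : EuclideanSpace ℝ (Fin 3),
        -Complex.exp (2 * Complex.I * k * ‖x‖) /
          (4 * π * ‖x‖ ^ 2 * (4 * π * α - Complex.I * k)) =
      1 / (2 * Complex.I * k * (4 * π * α - Complex.I * k)) := by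
  have hb : (2 * Complex.I * k).re < 0 := by simpa [Complex.mul_re] using hk
  have hsplit : (fun x : EuclideanSpace ℝ (Fin 3) =>
      -Complex.exp (2 * Complex.I * k * ‖x‖) / (4 * π * ‖x‖ ^ 2 * (4 * π * α - Complex.I * k))) =
      fun x => -(4 * π * (4 * π * α - Complex.I * k))⁻¹ *
        (Complex.exp (2 * Complex.I * k * ‖x‖) / (‖x‖ : ℂ) ^ 2) := by
    funext x
    simp only [div_eq_mul_inv, mul_inv]
    ring
  rw [hsplit, integral_const_mul, integral_cexp_mul_norm_div_norm_sq hb]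
  refine ⟨(integrable_cexp_mul_norm_div_norm_sq hb).const_mul _, ?_⟩
  have hπ : (π : ℂ) ≠ 0 := Complex.ofReal_ne_zero.mpr pi_ne_zero
  field_simp
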